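/- arXiv:2105.02784 — 8 statements merged into one kernel-verified Lean document; each statement's English description precedes it below -/
import Mathlib

section
/- For all real reserves a₁, b₁, b₂, c₂ > 0, fee parameters r₁, r₂ ∈ (0,1], and every input δ ≥ 0, composing two swaps gives a single swap through a virtual pool: swap(b₂, c₂, swap(a₁, b₁, δ)) = swap(a', c', δ), where a' = a₁·b₂/(b₂ + r₁·r₂·b₁) and c' = r₁·r₂·b₁·c₂/(b₂ + r₁·r₂·b₁). -/
/-- Constant-product AMM swap: output of swapping input `δ` through a pool with
input-side reserve `a`, output-side reserve `b` and fee parameters `r1, r2`. -/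
noncomputable def swap (r1 r2 a b δ : ℝ) : ℝ := r1 * r2 * b * δ / (a + r1 * δ)

/-- composing two swaps equals a single swap through a virtual pool. -/
theorem two_swaps_eq_virtual_pool
    (a1 b1 b2 c2 r1 r2 δ : ℝ)
    (ha1 : 0 < a1) (hb1 : 0 < b1) (hb2 : 0 < b2) (hc2 : 0 < c2)
    (hr1 : 0 < r1) (hr1' : r1 ≤ 1) (hr2 : 0 < r2) (hr2' : r2 ≤ 1)
    (hδ : 0 ≤ δ) :
    swap r1 r2 b2 c2 (swap r1 r2 a1 b1 δ) =
      swap r1 r2 (a1 * b2 / (b2 + r1 * r2 * b1))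
        (r1 * r2 * b1 * c2 / (b2 + r1 * r2 * b1)) δ := by
  have h1 : 0 < a1 + r1 * δ := by positivity
  have h2 : 0 < b2 + r1 * r2 * b1 := by positivity
  have h3 : 0 < b2 * (a1 + r1 * δ) + r1 * (r1 * r2 * b1 * δ) := by positivity
  have h4 : 0 < a1 * b2 + (b2 + r1 * r2 * b1) * (r1 * δ) := by positivity
  unfold swap
  have h5 : b2 + r1 * (r1 * r2 * b1 * δ / (a1 + r1 * δ)) ≠ 0 := by
    rw [mul_div_assoc']
    positivity
  field_simp
  ring
end

section
/- For all real reserves a₁, b₁, b₂, c₂, c₃, a₃ > 0, fee parameters r₁, r₂ ∈ (0,1], and every input δ ≥ 0, the output of the three-swap cycle A → B → C → A through pools (a₁,b₁), (b₂,c₂), (c₃,a₃) is swap(c₃, a₃, swap(b₂, c₂, swap(a₁, b₁, δ))) = r₁³·r₂³·b₁·c₂·a₃·δ / (a₁·b₂·c₃ + r₁·δ·(b₂·c₃ + r₁·r₂·b₁·c₃ + r₁²·r₂²·b₁·c₂)); consequently the utility U_{ABCA}(δ) of the cyclic transaction equals this output minus δ. -/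
/-- closed form for the three-swap cycle A → B → C → A, and the
resulting utility (output minus input) of the cyclic transaction. -/
theorem three_swap_cycle_closed_form
    (a1 b1 b2 c2 c3 a3 r1 r2 δ : ℝ)
    (ha1 : 0 < a1) (hb1 : 0 < b1) (hb2 : 0 < b2) (hc2 : 0 < c2)
    (hc3 : 0 < c3) (ha3 : 0 < a3)
    (hr1 : 0 < r1) (hr1' : r1 ≤ 1) (hr2 : 0 < r2) (hr2' : r2 ≤ 1)
    (hδ : 0 ≤ δ) :
    swap r1 r2 c3 a3 (swap r1 r2 b2 c2 (swap r1 r2 a1 b1 δ)) =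
      r1 ^ 3 * r2 ^ 3 * b1 * c2 * a3 * δ /
        (a1 * b2 * c3 +
          r1 * δ * (b2 * c3 + r1 * r2 * b1 * c3 + r1 ^ 2 * r2 ^ 2 * b1 * c2)) ∧
    swap r1 r2 c3 a3 (swap r1 r2 b2 c2 (swap r1 r2 a1 b1 δ)) - δ =
      r1 ^ 3 * r2 ^ 3 * b1 * c2 * a3 * δ /
        (a1 * b2 * c3 +
          r1 * δ * (b2 * c3 + r1 * r2 * b1 * c3 + r1 ^ 2 * r2 ^ 2 * b1 * c2)) - δ := by

  have h1 : 0 < a1 + r1 * δ := by positivity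
  have s1 : swap r1 r2 a1 b1 δ = r1 * r2 * b1 * δ / (a1 + r1 * δ) := rfl
  have hs1 : 0 ≤ swap r1 r2 a1 b1 δ := by rw [s1]; positivity
  have h2 : 0 < b2 + r1 * swap r1 r2 a1 b1 δ := by positivity
  have hs2 : 0 ≤ swap r1 r2 b2 c2 (swap r1 r2 a1 b1 δ) := by
    unfold swap; positivity
  have h3 : 0 < c3 + r1 * swap r1 r2 b2 c2 (swap r1 r2 a1 b1 δ) := by positivity
  have key : swap r1 r2 c3 a3 (swap r1 r2 b2 c2 (swap r1 r2 a1 b1 δ)) =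
      r1 ^ 3 * r2 ^ 3 * b1 * c2 * a3 * δ /
        (a1 * b2 * c3 +
          r1 * δ * (b2 * c3 + r1 * r2 * b1 * c3 + r1 ^ 2 * r2 ^ 2 * b1 * c2)) := by
    have hden : 0 < a1 * b2 * c3 +
          r1 * δ * (b2 * c3 + r1 * r2 * b1 * c3 + r1 ^ 2 * r2 ^ 2 * b1 * c2) := by
      positivity
    unfold swap at *
    field_simp
    ring
  exact ⟨key, by rw [key]⟩
end

section
/- For every n ≥ 1, every sequence of n constant-product pools with positive reserves (a₁,b₁), (a₂,b₂), …, (aₙ,bₙ), and fee parameters r₁, r₂ ∈ (0,1], there exist positive real virtual reserves A_v, C_v > 0 such that for every input δ ≥ 0 the n-fold composed swap output, obtained by feeding δ through pool 1, the result through pool 2, and so on through pool n, equals swap(A_v, C_v, δ). -/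
/-- Output of feeding an input through a sequence of pools; each pool is a pair
`(input-side reserve, output-side reserve)` along the direction of trade. -/
noncomputable def cyclicOut (r1 r2 : ℝ) : List (ℝ × ℝ) → ℝ → ℝ
  | [], δ => δ
  | p :: ps, δ => cyclicOut r1 r2 ps (swap r1 r2 p.1 p.2 δ)

/-- Arbitrage index of a cycle of pools: product of output-side reserves divided
by product of input-side reserves. -/
noncomputable def arbIndex (ps : List (ℝ × ℝ)) : ℝ :=
  (ps.map Prod.snd).prod / (ps.map Prod.fst).prod

/-- The reversed cycle: the same pools in opposite order with the roles of the
two reserves of each pool interchanged. -/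
def revPools (ps : List (ℝ × ℝ)) : List (ℝ × ℝ) := (ps.map Prod.swap).reverse

/-- The updated pools after executing a cyclic transaction with input `δ`:
each pool's input-side reserve increases by the amount swapped in and its
output-side reserve decreases by the amount swapped out. -/
noncomputable def execPools (r1 r2 : ℝ) : List (ℝ × ℝ) → ℝ → List (ℝ × ℝ)
  | [], _ => []
  | p :: ps, δ =>
      (p.1 + δ, p.2 - swap r1 r2 p.1 p.2 δ) :: execPools r1 r2 ps (swap r1 r2 p.1 p.2 δ)

/-- The single pool equivalent to trading through `p` and then through `P`. -/
noncomputable def seqPool (r1 r2 : ℝ) (p P : ℝ × ℝ) : ℝ × ℝ :=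
  (P.1 * p.1 / (P.1 + r1 * r2 * p.2), r1 * r2 * P.2 * p.2 / (P.1 + r1 * r2 * p.2))

noncomputable def virtualPool (r1 r2 : ℝ) (p : ℝ × ℝ) : List (ℝ × ℝ) → ℝ × ℝ
  | [] => p
  | q :: qs => seqPool r1 r2 p (virtualPool r1 r2 q qs)

lemma swap_nonneg {r1 r2 a b δ : ℝ} (hr1 : 0 ≤ r1) (hr2 : 0 ≤ r2) (ha : 0 ≤ a) (hb : 0 ≤ b)
    (hδ : 0 ≤ δ) : 0 ≤ swap r1 r2 a b δ := by
  unfold swap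
  positivity

lemma swap_swap {r1 r2 δ : ℝ} {p P : ℝ × ℝ} (hδ : p.1 + r1 * δ ≠ 0)
    (hP : P.1 + r1 * r2 * p.2 ≠ 0) :
    swap r1 r2 P.1 P.2 (swap r1 r2 p.1 p.2 δ) =
      swap r1 r2 (seqPool r1 r2 p P).1 (seqPool r1 r2 p P).2 δ := by
  unfold swap seqPool
  field_simp
  ring

lemma seqPool_pos {r1 r2 : ℝ} {p P : ℝ × ℝ} (hr : 0 < r1 * r2) (hp : 0 < p.1 ∧ 0 < p.2)
    (hP : 0 < P.1 ∧ 0 < P.2) : 0 < (seqPool r1 r2 p P).1 ∧ 0 < (seqPool r1 r2 p P).2 := by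
  obtain ⟨hp1, hp2⟩ := hp
  obtain ⟨hP1, hP2⟩ := hP
  unfold seqPool
  constructor <;> positivity

lemma virtualPool_pos {r1 r2 : ℝ} (hr : 0 < r1 * r2) {p : ℝ × ℝ} {qs : List (ℝ × ℝ)}
    (hpos : ∀ q ∈ p :: qs, 0 < q.1 ∧ 0 < q.2) :
    0 < (virtualPool r1 r2 p qs).1 ∧ 0 < (virtualPool r1 r2 p qs).2 := by
  induction qs generalizing p with
  | nil => exact hpos p List.mem_cons_self
  | cons q qs ih =>
    exact seqPool_pos hr (hpos p List.mem_cons_self)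
      (ih fun x hx => hpos x (List.mem_cons_of_mem p hx))

lemma cyclicOut_cons_eq_swap_virtualPool {r1 r2 δ : ℝ} (hr1 : 0 < r1) (hr2 : 0 < r2)
    {p : ℝ × ℝ} {qs : List (ℝ × ℝ)} (hpos : ∀ q ∈ p :: qs, 0 < q.1 ∧ 0 < q.2) (hδ : 0 ≤ δ) :
    cyclicOut r1 r2 (p :: qs) δ =
      swap r1 r2 (virtualPool r1 r2 p qs).1 (virtualPool r1 r2 p qs).2 δ := by
  induction qs generalizing p δ with
  | nil => rfl
  | cons q qs ih =>
    obtain ⟨hp1, hp2⟩ := hpos p List.mem_cons_self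
    have htail : ∀ x ∈ q :: qs, 0 < x.1 ∧ 0 < x.2 :=
      fun x hx => hpos x (List.mem_cons_of_mem p hx)
    obtain ⟨hV1, -⟩ := virtualPool_pos (mul_pos hr1 hr2) htail
    calc cyclicOut r1 r2 (p :: q :: qs) δ
        = cyclicOut r1 r2 (q :: qs) (swap r1 r2 p.1 p.2 δ) := rfl
      _ = swap r1 r2 (virtualPool r1 r2 q qs).1 (virtualPool r1 r2 q qs).2
            (swap r1 r2 p.1 p.2 δ) :=
          ih htail (swap_nonneg hr1.le hr2.le hp1.le hp2.le hδ)
      _ = _ := swap_swap (by positivity) (by positivity)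

theorem composed_swaps_eq_virtual_pool_general
    (n : ℕ) (hn : 1 ≤ n) (ps : List (ℝ × ℝ)) (hlen : ps.length = n)
    (hpos : ∀ p ∈ ps, 0 < p.1 ∧ 0 < p.2)
    (r1 r2 : ℝ) (hr1 : 0 < r1) (hr2 : 0 < r2) :
    ∃ Av Cv : ℝ, 0 < Av ∧ 0 < Cv ∧
      ∀ δ : ℝ, 0 ≤ δ → cyclicOut r1 r2 ps δ = swap r1 r2 Av Cv δ := by
  obtain ⟨p, qs, rfl⟩ := List.exists_cons_of_ne_nil (List.ne_nil_of_length_pos (hlen ▸ hn))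
  obtain ⟨hAv, hCv⟩ := virtualPool_pos (mul_pos hr1 hr2) hpos
  exact ⟨_, _, hAv, hCv, fun δ hδ => cyclicOut_cons_eq_swap_virtualPool hr1 hr2 hpos hδ⟩

/-- a composition of swaps through n pools equals a single swap
through a virtual pool with positive virtual reserves. -/
theorem composed_swaps_eq_virtual_pool
    (n : ℕ) (hn : 1 ≤ n) (ps : List (ℝ × ℝ)) (hlen : ps.length = n)
    (hpos : ∀ p ∈ ps, 0 < p.1 ∧ 0 < p.2)
    (r1 r2 : ℝ) (hr1 : 0 < r1) (hr1' : r1 ≤ 1) (hr2 : 0 < r2) (hr2' : r2 ≤ 1) :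
    ∃ Av Cv : ℝ, 0 < Av ∧ 0 < Cv ∧
      ∀ δ : ℝ, 0 ≤ δ → cyclicOut r1 r2 ps δ = swap r1 r2 Av Cv δ :=
  composed_swaps_eq_virtual_pool_general n hn ps hlen hpos r1 r2 hr1 hr2
end

section
/- For a cyclic transaction through a cycle with n+1 pools, the right derivative of the utility function U at δ = 0 equals (r₁·r₂)^{n+1}·I − 1, where I is the arbitrage index of the cycle; that is, ∂U/∂δ |_{δ=0} = r₁^{n+1}·r₂^{n+1}·(a_{n+1}·b¹₁·b²₂·…·bⁿₙ)/(a₁·b¹₂·b²₃·…·bⁿ_{n+1}) − 1. -/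
/-! Every swap fixes `0` and has slope `r₁r₂·b/a` there, so by the chain rule the cyclic output
has slope `(r₁r₂)^(n+1) · ∏ bᵢ/aᵢ = (r₁r₂)^(n+1) · I` at `0`; the derivative is even two-sided. -/

theorem swap_zero (r1 r2 a b : ℝ) : swap r1 r2 a b 0 = 0 := by simp [swap]

theorem hasDerivAt_swap (r1 r2 a b δ : ℝ) (h : a + r1 * δ ≠ 0) :
    HasDerivAt (swap r1 r2 a b) (r1 * r2 * b * a / (a + r1 * δ) ^ 2) δ := by
  have hnum : HasDerivAt (fun x : ℝ => r1 * r2 * b * x) (r1 * r2 * b) δ := by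
    simpa using (hasDerivAt_id δ).const_mul (r1 * r2 * b)
  have hden : HasDerivAt (fun x : ℝ => a + r1 * x) r1 δ := by
    simpa using ((hasDerivAt_id δ).const_mul r1).const_add a
  exact (hnum.div hden h).congr_deriv (by ring)

theorem hasDerivAt_swap_zero (r1 r2 a b : ℝ) (ha : a ≠ 0) :
    HasDerivAt (swap r1 r2 a b) (r1 * r2 * (b / a)) 0 := by
  refine (hasDerivAt_swap r1 r2 a b 0 (by simpa using ha)).congr_deriv ?_
  rw [mul_zero, add_zero]
  field_simp

theorem arbIndex_cons (p : ℝ × ℝ) (ps : List (ℝ × ℝ)) :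
    arbIndex (p :: ps) = p.2 / p.1 * arbIndex ps := by
  simp only [arbIndex, List.map_cons, List.prod_cons, mul_div_mul_comm]

theorem hasDerivAt_cyclicOut_zero (r1 r2 : ℝ) (ps : List (ℝ × ℝ)) (hps : ∀ p ∈ ps, p.1 ≠ 0) :
    HasDerivAt (cyclicOut r1 r2 ps) ((r1 * r2) ^ ps.length * arbIndex ps) 0 := by
  induction ps with
  | nil => exact (hasDerivAt_id 0).congr_deriv (by simp [arbIndex])
  | cons p ps ih =>
    have hrest := ih fun q hq => hps q (List.mem_cons_of_mem p hq)
    rw [← swap_zero r1 r2 p.1 p.2] at hrest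
    have hfirst := hasDerivAt_swap_zero r1 r2 p.1 p.2 (hps p List.mem_cons_self)
    refine (hrest.comp 0 hfirst).congr_deriv ?_
    rw [List.length_cons, arbIndex_cons]
    ring

theorem utility_right_deriv_at_zero_general
    (n : ℕ) (ps : List (ℝ × ℝ)) (hlen : ps.length = n + 1)
    (hpos : ∀ p ∈ ps, 0 < p.1 ∧ 0 < p.2)
    (r1 r2 : ℝ) :
    HasDerivWithinAt (fun δ : ℝ => cyclicOut r1 r2 ps δ - δ)
      (r1 ^ (n + 1) * r2 ^ (n + 1) * arbIndex ps - 1) (Set.Ici 0) 0 := by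
  have hout := hasDerivAt_cyclicOut_zero r1 r2 ps fun p hp => (hpos p hp).1.ne'
  rw [hlen, mul_pow] at hout
  exact (hout.sub (hasDerivAt_id 0)).hasDerivWithinAt

/-- the right derivative at 0 of the utility of a cyclic
transaction through a cycle of length n+1 equals (r1*r2)^(n+1) times the
arbitrage index of the cycle, minus 1. -/
theorem utility_right_deriv_at_zero
    (n : ℕ) (ps : List (ℝ × ℝ)) (hlen : ps.length = n + 1)
    (hpos : ∀ p ∈ ps, 0 < p.1 ∧ 0 < p.2)
    (r1 r2 : ℝ) (hr1 : 0 < r1) (hr1' : r1 ≤ 1) (hr2 : 0 < r2) (hr2' : r2 ≤ 1) :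
    HasDerivWithinAt (fun δ : ℝ => cyclicOut r1 r2 ps δ - δ)
      (r1 ^ (n + 1) * r2 ^ (n + 1) * arbIndex ps - 1) (Set.Ici 0) 0 :=
  utility_right_deriv_at_zero_general n ps hlen hpos r1 r2
end

section
/- The utility function of a cyclic transaction is strictly concave on the nonnegative reals: for a cycle of length n+1 with positive reserves and fee parameters r₁, r₂ ∈ (0,1], for all 0 ≤ δ₁ < δ₂ and all t ∈ (0,1), U(t·δ₁ + (1−t)·δ₂) > t·U(δ₁) + (1−t)·U(δ₂). -/
/-!
Each swap `δ ↦ r₁r₂bδ/(a + r₁δ)` is a strictly increasing, strictly concave map of `[0, ∞)` into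
itself. A concave nondecreasing function of a concave function is concave, and it is strictly concave
as soon as the outer function is strictly increasing and the inner one strictly concave; so the
cyclic output, a composite of at least one swap, is strictly concave on `[0, ∞)`, and subtracting
the linear input `δ` keeps it so.
-/

open Set

section Composition

variable {𝕜 E β γ : Type*} [Semiring 𝕜] [PartialOrder 𝕜] [AddCommMonoid E] [SMul 𝕜 E]
  [AddCommMonoid β] [PartialOrder β] [SMul 𝕜 β] [AddCommMonoid γ] [PartialOrder γ] [SMul 𝕜 γ]
  {s : Set E} {t : Set β} {f : E → β} {g : β → γ}

theorem ConcaveOn.comp_of_mapsTo (hg : ConcaveOn 𝕜 t g) (hf : ConcaveOn 𝕜 s f)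
    (hg' : MonotoneOn g t) (hst : MapsTo f s t) : ConcaveOn 𝕜 s (g ∘ f) :=
  ⟨hf.1, fun _ hx _ hy _ _ ha hb hab =>
    (hg.2 (hst hx) (hst hy) ha hb hab).trans <|
      hg' (hg.1 (hst hx) (hst hy) ha hb hab) (hst (hf.1 hx hy ha hb hab)) (hf.2 hx hy ha hb hab)⟩

theorem ConcaveOn.comp_strictConcaveOn_of_mapsTo (hg : ConcaveOn 𝕜 t g)
    (hf : StrictConcaveOn 𝕜 s f) (hg' : StrictMonoOn g t) (hst : MapsTo f s t) :
    StrictConcaveOn 𝕜 s (g ∘ f) :=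
  ⟨hf.1, fun _ hx _ hy hxy _ _ ha hb hab =>
    (hg.2 (hst hx) (hst hy) ha.le hb.le hab).trans_lt <|
      hg' (hg.1 (hst hx) (hst hy) ha.le hb.le hab) (hst (hf.1 hx hy ha.le hb.le hab))
        (hf.2 hx hy hxy ha hb hab)⟩

end Composition

section Swap

variable {r1 r2 a b : ℝ}

theorem swap_mapsTo (hr1 : 0 < r1) (hr2 : 0 < r2) (ha : 0 < a) (hb : 0 < b) :
    MapsTo (swap r1 r2 a b) (Ici 0) (Ici 0) := fun δ (hδ : 0 ≤ δ) => by
  change 0 ≤ r1 * r2 * b * δ / (a + r1 * δ)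
  positivity

theorem swap_strictMonoOn (hr1 : 0 < r1) (hr2 : 0 < r2) (ha : 0 < a) (hb : 0 < b) :
    StrictMonoOn (swap r1 r2 a b) (Ici 0) := fun x (hx : 0 ≤ x) y (hy : 0 ≤ y) hxy => by
  unfold swap
  rw [div_lt_div_iff₀ (by positivity) (by positivity)]
  nlinarith [mul_pos (mul_pos (mul_pos (mul_pos hr1 hr2) hb) ha) (sub_pos.mpr hxy)]

theorem swap_strictConcaveOn (hr1 : 0 < r1) (hr2 : 0 < r2) (ha : 0 < a) (hb : 0 < b) :
    StrictConcaveOn ℝ (Ici 0) (swap r1 r2 a b) := by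
  refine ⟨convex_Ici 0, fun x (hx : 0 ≤ x) y (hy : 0 ≤ y) hxy s t hs ht hst => ?_⟩
  simp only [smul_eq_mul]
  have gap : swap r1 r2 a b (s * x + t * y) - (s * swap r1 r2 a b x + t * swap r1 r2 a b y) =
      r1 ^ 2 * r2 * a * b * s * t * (x - y) ^ 2 /
        ((a + r1 * x) * (a + r1 * y) * (a + r1 * (s * x + t * y))) := by
    obtain rfl : t = 1 - s := by linarith
    unfold swap
    field_simp
    ring
  have : 0 < r1 ^ 2 * r2 * a * b * s * t * (x - y) ^ 2 /
      ((a + r1 * x) * (a + r1 * y) * (a + r1 * (s * x + t * y))) := by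
    have := sub_ne_zero.2 hxy
    positivity
  linarith

end Swap

section CyclicOut

variable {r1 r2 : ℝ}

theorem cyclicOut_cons (p : ℝ × ℝ) (ps : List (ℝ × ℝ)) :
    cyclicOut r1 r2 (p :: ps) = cyclicOut r1 r2 ps ∘ swap r1 r2 p.1 p.2 :=
  rfl

theorem cyclicOut_mapsTo (hr1 : 0 < r1) (hr2 : 0 < r2) :
    ∀ {ps : List (ℝ × ℝ)}, (∀ p ∈ ps, 0 < p.1 ∧ 0 < p.2) →
      MapsTo (cyclicOut r1 r2 ps) (Ici 0) (Ici 0)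
  | [], _ => mapsTo_id _
  | _ :: _, hpos => by
    obtain ⟨⟨ha, hb⟩, hpos⟩ := List.forall_mem_cons.1 hpos
    rw [cyclicOut_cons]
    exact (cyclicOut_mapsTo hr1 hr2 hpos).comp (swap_mapsTo hr1 hr2 ha hb)

theorem cyclicOut_strictMonoOn (hr1 : 0 < r1) (hr2 : 0 < r2) :
    ∀ {ps : List (ℝ × ℝ)}, (∀ p ∈ ps, 0 < p.1 ∧ 0 < p.2) →
      StrictMonoOn (cyclicOut r1 r2 ps) (Ici 0)
  | [], _ => strictMono_id.strictMonoOn _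
  | _ :: _, hpos => by
    obtain ⟨⟨ha, hb⟩, hpos⟩ := List.forall_mem_cons.1 hpos
    rw [cyclicOut_cons]
    exact (cyclicOut_strictMonoOn hr1 hr2 hpos).comp
      (swap_strictMonoOn hr1 hr2 ha hb) (swap_mapsTo hr1 hr2 ha hb)

theorem cyclicOut_concaveOn (hr1 : 0 < r1) (hr2 : 0 < r2) :
    ∀ {ps : List (ℝ × ℝ)}, (∀ p ∈ ps, 0 < p.1 ∧ 0 < p.2) →
      ConcaveOn ℝ (Ici 0) (cyclicOut r1 r2 ps)
  | [], _ => concaveOn_id (convex_Ici 0)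
  | _ :: _, hpos => by
    obtain ⟨⟨ha, hb⟩, hpos⟩ := List.forall_mem_cons.1 hpos
    rw [cyclicOut_cons]
    exact (cyclicOut_concaveOn hr1 hr2 hpos).comp_of_mapsTo
      (swap_strictConcaveOn hr1 hr2 ha hb).concaveOn
      (cyclicOut_strictMonoOn hr1 hr2 hpos).monotoneOn (swap_mapsTo hr1 hr2 ha hb)

theorem cyclicOut_strictConcaveOn (hr1 : 0 < r1) (hr2 : 0 < r2) {ps : List (ℝ × ℝ)}
    (hpos : ∀ p ∈ ps, 0 < p.1 ∧ 0 < p.2) (hps : ps ≠ []) :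
    StrictConcaveOn ℝ (Ici 0) (cyclicOut r1 r2 ps) := by
  obtain ⟨p, ps, rfl⟩ := List.exists_cons_of_ne_nil hps
  obtain ⟨⟨ha, hb⟩, hpos⟩ := List.forall_mem_cons.1 hpos
  rw [cyclicOut_cons]
  exact (cyclicOut_concaveOn hr1 hr2 hpos).comp_strictConcaveOn_of_mapsTo
    (swap_strictConcaveOn hr1 hr2 ha hb) (cyclicOut_strictMonoOn hr1 hr2 hpos)
    (swap_mapsTo hr1 hr2 ha hb)

end CyclicOut

theorem utility_strictly_concave_general
    (n : ℕ) (ps : List (ℝ × ℝ)) (hlen : ps.length = n + 1)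
    (hpos : ∀ p ∈ ps, 0 < p.1 ∧ 0 < p.2)
    (r1 r2 : ℝ) (hr1 : 0 < r1) (hr2 : 0 < r2) :
    ∀ δ1 δ2 : ℝ, 0 ≤ δ1 → δ1 < δ2 → ∀ t : ℝ, 0 < t → t < 1 →
      t * (cyclicOut r1 r2 ps δ1 - δ1) + (1 - t) * (cyclicOut r1 r2 ps δ2 - δ2) <
        cyclicOut r1 r2 ps (t * δ1 + (1 - t) * δ2) - (t * δ1 + (1 - t) * δ2) := by
  intro δ1 δ2 h1 h12 t ht ht'
  have hps : ps ≠ [] := List.ne_nil_of_length_pos (by omega)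
  have hU := (cyclicOut_strictConcaveOn hr1 hr2 hpos hps).sub_convexOn (convexOn_id (convex_Ici 0))
  simpa using hU.2 h1 (h1.trans h12.le) h12.ne ht (sub_pos.2 ht') (add_sub_cancel t 1)

/-- the utility of a cyclic transaction is strictly concave on the
nonnegative reals. -/
theorem utility_strictly_concave
    (n : ℕ) (ps : List (ℝ × ℝ)) (hlen : ps.length = n + 1)
    (hpos : ∀ p ∈ ps, 0 < p.1 ∧ 0 < p.2)
    (r1 r2 : ℝ) (hr1 : 0 < r1) (hr1' : r1 ≤ 1) (hr2 : 0 < r2) (hr2' : r2 ≤ 1) :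
    ∀ δ1 δ2 : ℝ, 0 ≤ δ1 → δ1 < δ2 → ∀ t : ℝ, 0 < t → t < 1 →
      t * (cyclicOut r1 r2 ps δ1 - δ1) + (1 - t) * (cyclicOut r1 r2 ps δ2 - δ2) <
        cyclicOut r1 r2 ps (t * δ1 + (1 - t) * δ2) - (t * δ1 + (1 - t) * δ2) :=
  utility_strictly_concave_general n ps hlen hpos r1 r2 hr1 hr2
end

section
/- A round trip through a single constant-product pool is never profitable: for reserves a, b > 0, fee parameters r₁, r₂ ∈ (0,1], and any input δ > 0, let out₁ = swap(a, b, δ) and let out₂ = swap(b − out₁, a + δ, out₁) be the result of swapping out₁ back through the updated pool. Then out₂ ≤ δ, with equality if and only if r₁·r₂ = 1; in particular out₂ < δ whenever r₁·r₂ < 1. -/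
/-- a round trip through a single constant-product pool is never
profitable; it breaks even exactly when there are no fees. -/
theorem round_trip_not_profitable
    (a b r1 r2 δ : ℝ) (ha : 0 < a) (hb : 0 < b)
    (hr1 : 0 < r1) (hr1' : r1 ≤ 1) (hr2 : 0 < r2) (hr2' : r2 ≤ 1)
    (hδ : 0 < δ) :
    swap r1 r2 (b - swap r1 r2 a b δ) (a + δ) (swap r1 r2 a b δ) ≤ δ ∧
    (swap r1 r2 (b - swap r1 r2 a b δ) (a + δ) (swap r1 r2 a b δ) = δ ↔ r1 * r2 = 1) ∧
    (r1 * r2 < 1 → swap r1 r2 (b - swap r1 r2 a b δ) (a + δ) (swap r1 r2 a b δ) < δ) := by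
  have hd1 : 0 < a + r1 * δ := by positivity
  have hkr : r1 * r2 ≤ r1 := by nlinarith
  have hk1 : r1 * r2 ≤ 1 := le_trans hkr hr1'
  have hk0 : 0 < r1 * r2 := by positivity
  have hd2 : (0:ℝ) < a + r1 * δ - (1 - r1) * (r1 * r2) * δ := by nlinarith
  have hout1 : swap r1 r2 a b δ = r1 * r2 * b * δ / (a + r1 * δ) := rfl
  have hcomb : b - swap r1 r2 a b δ + r1 * swap r1 r2 a b δ
      = b * (a + r1 * δ - (1 - r1) * (r1 * r2) * δ) / (a + r1 * δ) := by
    rw [hout1]; field_simp; ring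
  have hout2 : swap r1 r2 (b - swap r1 r2 a b δ) (a + δ) (swap r1 r2 a b δ)
      = (r1*r2)^2 * δ * (a + δ) / (a + r1 * δ - (1 - r1) * (r1 * r2) * δ) := by
    show r1 * r2 * (a + δ) * (swap r1 r2 a b δ) /
        (b - swap r1 r2 a b δ + r1 * swap r1 r2 a b δ) = _
    rw [hcomb, hout1]
    rw [div_eq_div_iff (by positivity) (ne_of_gt hd2)]
    field_simp
  rw [hout2]
  have e1 : 0 ≤ a * ((1 - r1*r2) * (1 + r1*r2)) :=
    mul_nonneg ha.le (mul_nonneg (by linarith) (by linarith))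
  have e2 : 0 ≤ δ * (r1 - r1*r2) * (1 + r1*r2) :=
    mul_nonneg (mul_nonneg hδ.le (by linarith)) (by linarith)
  refine ⟨?_, ?_, ?_⟩
  · rw [div_le_iff₀ hd2]
    nlinarith [mul_nonneg hδ.le e1, mul_nonneg hδ.le (mul_nonneg (mul_nonneg hδ.le (by linarith : (0:ℝ) ≤ r1 - r1*r2)) (by linarith : (0:ℝ) ≤ 1 + r1*r2))]
  · rw [div_eq_iff (ne_of_gt hd2)]
    constructor
    · intro h
      have hz : δ * (a * ((1 - r1*r2) * (1 + r1*r2)) + δ * (r1 - r1*r2) * (1 + r1*r2)) = 0 := by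
        linear_combination -h
      have h2 : a * ((1 - r1*r2) * (1 + r1*r2)) + δ * (r1 - r1*r2) * (1 + r1*r2) = 0 :=
        (mul_eq_zero.mp hz).resolve_left hδ.ne'
      have h3 : a * ((1 - r1*r2) * (1 + r1*r2)) = 0 := le_antisymm (by linarith) e1
      have h4 : (1 - r1*r2) * (1 + r1*r2) = 0 :=
        (mul_eq_zero.mp h3).resolve_left ha.ne'
      rcases mul_eq_zero.mp h4 with h5 | h5 <;> linarith
    · intro h
      have h1 : r1 = 1 := by nlinarith
      have h2 : r2 = 1 := by rw [h1, one_mul] at h; exact h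
      rw [h1, h2]; ring
  · intro hlt
    rw [div_lt_iff₀ hd2]
    have e1' : 0 < a * ((1 - r1*r2) * (1 + r1*r2)) :=
      mul_pos ha (mul_pos (by linarith) (by linarith))
    nlinarith [mul_pos hδ e1', mul_nonneg hδ.le e2]
end

section
/- Cross-venue two-pool arbitrage: let two constant-product pools between the same pair of tokens A and B have positive reserves (a₁, b₁) (reserve of A, reserve of B in the first pool) and (b₂, a₂) (reserve of B, reserve of A in the second pool), with fee parameters r₁, r₂ ∈ (0,1]. If a₂·b₁/(a₁·b₂) > 1/(r₁²·r₂²), then there exists an input δ > 0 such that swap(b₂, a₂, swap(a₁, b₁, δ)) > δ, i.e., the length-2 cyclic transaction A → B → A across the two pools is profitable. -/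
theorem swap_swap_s12 (r1 r2 s1 s2 a1 b1 b2 a2 δ : ℝ) (h : a1 + r1 * δ ≠ 0) :
    swap s1 s2 b2 a2 (swap r1 r2 a1 b1 δ) =
      r1 * r2 * s1 * s2 * a2 * b1 * δ / (a1 * b2 + (r1 * b2 + s1 * r1 * r2 * b1) * δ) := by
  have hden : b2 + s1 * (r1 * r2 * b1 * δ / (a1 + r1 * δ)) =
      (a1 * b2 + (r1 * b2 + s1 * r1 * r2 * b1) * δ) / (a1 + r1 * δ) := by
    field_simp
    ring
  rw [swap, swap, hden, mul_div_assoc', div_div_div_cancel_right₀ h]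
  ring

theorem exists_pos_lt_mul_div_add {K A c : ℝ} (hA : 0 ≤ A) (hc : 0 < c) (hAK : A < K) :
    ∃ δ > 0, δ < K * δ / (A + c * δ) := by
  -- half the break-even input `(K - A) / c`
  refine ⟨(K - A) / (2 * c), by positivity, ?_⟩
  rw [lt_div_iff₀ (by positivity)]
  field_simp
  nlinarith [mul_pos (sub_pos.2 hAK) (sub_pos.2 hAK)]

theorem cross_venue_arbitrage_general
    (a1 b1 b2 a2 r1 r2 : ℝ)
    (ha1 : 0 < a1) (hb1 : 0 < b1) (hb2 : 0 < b2)
    (hr1 : 0 < r1) (hr2 : 0 < r2)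
    (hI : a2 * b1 / (a1 * b2) > 1 / (r1 ^ 2 * r2 ^ 2)) :
    ∃ δ : ℝ, 0 < δ ∧ swap r1 r2 b2 a2 (swap r1 r2 a1 b1 δ) > δ := by
  have hK : a1 * b2 < r1 * r2 * r1 * r2 * a2 * b1 := by
    rw [gt_iff_lt, div_lt_div_iff₀ (by positivity) (by positivity)] at hI
    linarith
  obtain ⟨δ, hδ, hprofit⟩ := exists_pos_lt_mul_div_add (c := r1 * b2 + r1 * r1 * r2 * b1)
    (by positivity) (by positivity) hK
  refine ⟨δ, hδ, ?_⟩
  rw [swap_swap_s12 _ _ _ _ _ _ _ _ _ (by positivity)]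
  simpa only [mul_assoc] using hprofit

/-- cross-venue two-pool arbitrage: if the arbitrage index of the
length-2 cycle A → B → A across two pools exceeds 1/(r1² r2²), a profitable
input exists. -/
theorem cross_venue_arbitrage
    (a1 b1 b2 a2 r1 r2 : ℝ)
    (ha1 : 0 < a1) (hb1 : 0 < b1) (hb2 : 0 < b2) (ha2 : 0 < a2)
    (hr1 : 0 < r1) (hr1' : r1 ≤ 1) (hr2 : 0 < r2) (hr2' : r2 ≤ 1)
    (hI : a2 * b1 / (a1 * b2) > 1 / (r1 ^ 2 * r2 ^ 2)) :
    ∃ δ : ℝ, 0 < δ ∧ swap r1 r2 b2 a2 (swap r1 r2 a1 b1 δ) > δ :=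
  cross_venue_arbitrage_general a1 b1 b2 a2 r1 r2 ha1 hb1 hb2 hr1 hr2 hI
end

section
/- Fee accrual increases the reserve product: for a constant-product pool with reserves a, b > 0, fee parameters r₁ ∈ (0,1] and r₂ = 1, and any input δ ≥ 0, the product of reserves after the swap satisfies (a + δ)·(b − swap(a,b,δ)) − a·b = δ·(1 − r₁)·(b − swap(a,b,δ)). In particular the product of reserves never decreases under a swap, and it strictly increases if and only if δ > 0 and r₁ < 1. -/
/-- fee accrual increases the reserve product (with r2 = 1): the
increase of the product of reserves equals δ·(1 − r1)·(b − swap(a,b,δ)); the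
product never decreases, and strictly increases iff δ > 0 and r1 < 1. -/
theorem fee_accrual_increases_product
    (a b r1 δ : ℝ) (ha : 0 < a) (hb : 0 < b)
    (hr1 : 0 < r1) (hr1' : r1 ≤ 1) (hδ : 0 ≤ δ) :
    (a + δ) * (b - swap r1 1 a b δ) - a * b = δ * (1 - r1) * (b - swap r1 1 a b δ) ∧
    a * b ≤ (a + δ) * (b - swap r1 1 a b δ) ∧
    (a * b < (a + δ) * (b - swap r1 1 a b δ) ↔ 0 < δ ∧ r1 < 1) := by
  have hD : 0 < a + r1 * δ := by positivity
  have hsw : b - swap r1 1 a b δ = a * b / (a + r1 * δ) := by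
    unfold swap
    field_simp
    ring
  have hkey : (a + δ) * (b - swap r1 1 a b δ) - a * b
      = δ * (1 - r1) * (a * b / (a + r1 * δ)) := by
    rw [hsw]
    field_simp
    ring
  refine ⟨by rw [hkey, hsw], ?_, ?_⟩
  · nlinarith [mul_pos ha hb, div_pos (mul_pos ha hb) hD,
      mul_nonneg (mul_nonneg hδ (sub_nonneg.mpr hr1')) (le_of_lt (div_pos (mul_pos ha hb) hD))]
  · have hpos : 0 < a * b / (a + r1 * δ) := div_pos (mul_pos ha hb) hD
    constructor
    · intro h
      have h' : 0 < δ * (1 - r1) * (a * b / (a + r1 * δ)) := by linarith [hkey]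
      have h2 : 0 < δ * (1 - r1) := by nlinarith [h', hpos]
      exact ⟨by nlinarith, by nlinarith⟩
    · rintro ⟨hd, hr⟩
      have : 0 < δ * (1 - r1) * (a * b / (a + r1 * δ)) :=
        mul_pos (mul_pos hd (by linarith)) hpos
      linarith [hkey]
end
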